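/- The estimator V₂ = N⁻¹ ∑_{n=1}^N f(Xₙ) f(X'ₙ) − ((μ̂ + μ̂')/2)² satisfies E[V₂] = σ_Y² − (σ² + σ_Y²)/(2N). -/

import Mathlib

open MeasureTheory ProbabilityTheory Filter Topology
open scoped ENNReal

/-!
Applied to the truncations of `f`, the hypotheses give `E[f(X) f(X')] = E[E[f(X) | 𝓖]²]` in the
limit, since conditional expectation is a contraction of `L²`; as they also force `X` and `X'` to
have the same law, `Cov(f(X), f(X')) = σ_Y²`. For i.i.d. copies of any identically distributed
square-integrable pair `(a, b)`, expanding the square and using independence across the sample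
gives `E[V₂] = Cov(a, b) - (Var a + Cov(a, b)) / (2N)`.
-/

section

variable {α β ι : Type*} {m : MeasurableSpace α} {μ : Measure α} [NormedAddCommGroup β]
  {p : ℝ≥0∞}

lemma unifIntegrable_of_norm_le {f : ι → α → β} {g : α → β} (hp : 1 ≤ p) (hp' : p ≠ ∞)
    (hg : MemLp g p μ) (hfg : ∀ i x, ‖f i x‖ ≤ ‖g x‖) : UnifIntegrable f p μ := by
  intro ε hε
  obtain ⟨δ, hδ, h⟩ := unifIntegrable_const (ι := Unit) hp hp' hg hε
  refine ⟨δ, hδ, fun i s hs hμs => (eLpNorm_mono fun x => ?_).trans (h () s hs hμs)⟩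
  by_cases hx : x ∈ s <;> simp [hx, hfg i x]

lemma tendsto_eLpNorm_truncation_sub [IsFiniteMeasure μ] {u : α → ℝ} (hp : 1 ≤ p) (hp' : p ≠ ∞)
    (hu : MemLp u p μ) :
    Tendsto (fun k : ℕ => eLpNorm (truncation u k - u) p μ) atTop (𝓝 0) :=
  tendsto_Lp_finite_of_tendsto_ae hp hp' (fun _ => hu.aestronglyMeasurable.truncation) hu
    (unifIntegrable_of_norm_le hp hp' hu fun k x => abs_truncation_le_abs_self u k x)
    (ae_of_all _ fun x => tendsto_const_nhds.congr' <|
      (eventually_gt_atTop ⌈|u x|⌉₊).mono fun _ hk =>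
        (truncation_eq_self ((Nat.le_ceil _).trans_lt (by exact_mod_cast hk))).symm)

end

section

variable {α : Type*} {m m₀ : MeasurableSpace α} {μ : Measure α} {p : ℝ≥0∞}

lemma tendsto_eLpNorm_condExp_sub {u : ℕ → α → ℝ} {v : α → ℝ} (hp : 1 ≤ p)
    (hu : ∀ k, Integrable (u k) μ) (hv : Integrable v μ)
    (h : Tendsto (fun k => eLpNorm (u k - v) p μ) atTop (𝓝 0)) :
    Tendsto (fun k => eLpNorm (μ[u k|m] - μ[v|m]) p μ) atTop (𝓝 0) := by
  refine tendsto_of_tendsto_of_tendsto_of_le_of_le tendsto_const_nhds h (fun _ => zero_le)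
    fun k => ?_
  rw [← eLpNorm_congr_ae (condExp_sub (hu k) hv m)]
  exact eLpNorm_condExp_le_eLpNorm _ hp

lemma inner_toLp_toLp {u v : α → ℝ} (hu : MemLp u 2 μ) (hv : MemLp v 2 μ) :
    inner ℝ (hu.toLp u) (hv.toLp v) = ∫ x, u x * v x ∂μ := by
  rw [L2.inner_def]
  refine integral_congr_ae ?_
  filter_upwards [hu.coeFn_toLp, hv.coeFn_toLp] with x hux hvx
  simp [hux, hvx, mul_comm]

lemma tendsto_integral_mul_of_tendsto_eLpNorm {u v : ℕ → α → ℝ} {u' v' : α → ℝ}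
    (hu : ∀ k, MemLp (u k) 2 μ) (hv : ∀ k, MemLp (v k) 2 μ) (hu' : MemLp u' 2 μ)
    (hv' : MemLp v' 2 μ) (hu_lim : Tendsto (fun k => eLpNorm (u k - u') 2 μ) atTop (𝓝 0))
    (hv_lim : Tendsto (fun k => eLpNorm (v k - v') 2 μ) atTop (𝓝 0)) :
    Tendsto (fun k => ∫ x, u k x * v k x ∂μ) atTop (𝓝 (∫ x, u' x * v' x ∂μ)) := by
  have hU := (Lp.tendsto_Lp_iff_tendsto_eLpNorm'' u hu u' hu').2 hu_lim
  have hV := (Lp.tendsto_Lp_iff_tendsto_eLpNorm'' v hv v' hv').2 hv_lim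
  simpa only [inner_toLp_toLp] using hU.inner (𝕜 := ℝ) hV

end

lemma identDistrib_of_forall_integral_eq {Ω F : Type*} [MeasurableSpace Ω] [MeasurableSpace F]
    {P : Measure Ω} [IsFiniteMeasure P] {X X' : Ω → F} (hX : Measurable X) (hX' : Measurable X')
    (h : ∀ g : F → ℝ, Measurable g → (∃ C, ∀ x, |g x| ≤ C) →
      ∫ ω, g (X ω) ∂P = ∫ ω, g (X' ω) ∂P) :
    IdentDistrib X X' P P := by
  refine ⟨hX.aemeasurable, hX'.aemeasurable, Measure.ext fun s hs => ?_⟩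
  have hind := h (s.indicator 1) (measurable_one.indicator hs)
    ⟨1, fun x => by by_cases hx : x ∈ s <;> simp [hx]⟩
  change ∫ ω, (X ⁻¹' s).indicator 1 ω ∂P = ∫ ω, (X' ⁻¹' s).indicator 1 ω ∂P at hind
  rw [integral_indicator_one (hX hs), integral_indicator_one (hX' hs)] at hind
  rw [Measure.map_apply hX hs, Measure.map_apply hX' hs]
  exact (measureReal_eq_measureReal_iff).1 hind

lemma integral_sum_sq_of_pairwise_indepFun {Ω ι : Type*} [MeasurableSpace Ω] {P : Measure Ω}
    [IsProbabilityMeasure P] {S : ι → Ω → ℝ} (s : Finset ι) (hS : ∀ i ∈ s, MemLp (S i) 2 P)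
    (h_indep : Set.Pairwise s fun i j => S i ⟂ᵢ[P] S j) {a v : ℝ}
    (h_mean : ∀ i ∈ s, P[S i] = a) (h_var : ∀ i ∈ s, Var[S i; P] = v) :
    ∫ ω, (∑ i ∈ s, S i ω) ^ 2 ∂P = s.card * v + (s.card * a) ^ 2 := by
  have h_sum : MemLp (∑ i ∈ s, S i) 2 P := memLp_finsetSum' s hS
  have h_int : P[∑ i ∈ s, S i] = s.card * a := by
    rw [Finset.sum_fn, integral_finsetSum s fun i hi => (hS i hi).integrable one_le_two,
      Finset.sum_congr rfl h_mean]
    simp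
  have h := variance_eq_sub h_sum
  rw [IndepFun.variance_sum hS h_indep, Finset.sum_congr rfl h_var, h_int] at h
  simp only [Finset.sum_const, nsmul_eq_mul, Finset.sum_apply, Pi.pow_apply] at h
  linarith

lemma integral_avg_mul_sub_sq_avg {Ω : Type*} [MeasurableSpace Ω] {P : Measure Ω}
    [IsProbabilityMeasure P] {N : ℕ} (hN : N ≠ 0) {A B : Fin N → Ω → ℝ} {a b : Ω → ℝ}
    (ha : MemLp a 2 P) (hab : IdentDistrib a b P P)
    (h_law : ∀ n, IdentDistrib (fun ω => (A n ω, B n ω)) (fun ω => (a ω, b ω)) P P)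
    (h_indep : iIndepFun (fun n ω => (A n ω, B n ω)) P) :
    ∫ ω, ((N : ℝ)⁻¹ * ∑ n, A n ω * B n ω
        - (((N : ℝ)⁻¹ * ∑ n, A n ω + (N : ℝ)⁻¹ * ∑ n, B n ω) / 2) ^ 2) ∂P
      = cov[a, b; P] - (Var[a; P] + cov[a, b; P]) / (2 * N) := by
  have hb := hab.memLp_snd ha
  have h_add : Measurable fun x : ℝ × ℝ => x.1 + x.2 := by fun_prop
  have h_mul : Measurable fun x : ℝ × ℝ => x.1 * x.2 := by fun_prop
  have hS n : IdentDistrib (A n + B n) (a + b) P P := (h_law n).comp h_add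
  have hM n : IdentDistrib (fun ω => A n ω * B n ω) (a * b) P P := (h_law n).comp h_mul
  have hM_int n : Integrable (fun ω => A n ω * B n ω) P :=
    (hM n).symm.integrable_snd (ha.integrable_mul hb)
  have hS_L2 n : MemLp (A n + B n) 2 P := (hS n).symm.memLp_snd (ha.add hb)
  have h_sq := integral_sum_sq_of_pairwise_indepFun Finset.univ (fun n _ => hS_L2 n)
    (fun i _ j _ hij => (h_indep.indepFun hij).comp h_add h_add)
    (fun n _ => (hS n).integral_eq) (fun n _ => (hS n).variance_eq)
  have h_pt ω : ((N : ℝ)⁻¹ * ∑ n, A n ω + (N : ℝ)⁻¹ * ∑ n, B n ω) / 2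
      = (∑ n, (A n + B n) ω) / (2 * N) := by
    rw [← mul_add, ← Finset.sum_add_distrib]
    field_simp
    simp
  simp_rw [h_pt, div_pow]
  rw [integral_sub ((integrable_finsetSum _ fun n _ => hM_int n).const_mul _)
      ((memLp_finsetSum _ fun n _ => hS_L2 n).integrable_sq.div_const _), integral_const_mul,
    integral_div, integral_finsetSum _ fun n _ => hM_int n,
    Finset.sum_congr rfl fun n _ => (hM n).integral_eq, h_sq, variance_add ha hb,
    ← hab.variance_eq, covariance_eq_sub ha hb, Pi.add_def,
    integral_add (ha.integrable one_le_two) (hb.integrable one_le_two), ← hab.integral_eq]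
  simp only [Finset.sum_const, Finset.card_univ, Fintype.card_fin, nsmul_eq_mul]
  field_simp
  ring

lemma integral_mul_eq_integral_condExp_sq {Ω F : Type*} {m : MeasurableSpace Ω}
    [mΩ : MeasurableSpace Ω] [MeasurableSpace F] {P : Measure Ω} [IsProbabilityMeasure P]
    (hm : m ≤ mΩ) {X X' : Ω → F} {f : F → ℝ} (hX : Measurable X) (hX' : Measurable X')
    (hf : Measurable f) (hL2 : MemLp (fun ω => f (X ω)) 2 P)
    (hL2' : MemLp (fun ω => f (X' ω)) 2 P)
    (hCondIndep : ∀ g h : F → ℝ, Measurable g → Measurable h →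
      (∃ C, ∀ x, |g x| ≤ C) → (∃ C, ∀ x, |h x| ≤ C) →
      P[(fun ω => g (X ω) * h (X' ω))|m]
        =ᵐ[P] fun ω => ((P[(fun ω' => g (X ω'))|m]) ω) * ((P[(fun ω' => h (X' ω'))|m]) ω))
    (hSameCondDist : ∀ g : F → ℝ, Measurable g → (∃ C, ∀ x, |g x| ≤ C) →
      P[(fun ω => g (X ω))|m] =ᵐ[P] P[(fun ω => g (X' ω))|m]) :
    ∫ ω, f (X ω) * f (X' ω) ∂P = ∫ ω, (P[(fun ω => f (X ω))|m]) ω ^ 2 ∂P := by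
  have hg k : Measurable (truncation f k) := (measurable_id.indicator measurableSet_Ioc).comp hf
  have hg_bdd (k : ℕ) : ∃ C, ∀ x, |truncation f k x| ≤ C := ⟨_, abs_truncation_le_bound f k⟩
  have hgL2 {Z : Ω → F} (hZ : Measurable Z) (k : ℕ) :
      MemLp (truncation (fun ω => f (Z ω)) k) 2 P :=
    (hf.comp hZ).aestronglyMeasurable.memLp_truncation
  have h_bdd (k : ℕ) : ∫ ω, truncation f k (X ω) * truncation f k (X' ω) ∂P =
      ∫ ω, P[truncation (fun ω => f (X ω)) k|m] ω * P[truncation (fun ω => f (X ω)) k|m] ω ∂P := by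
    rw [← integral_condExp hm]
    refine integral_congr_ae ?_
    filter_upwards [hCondIndep _ _ (hg k) (hg k) (hg_bdd k) (hg_bdd k),
      hSameCondDist _ (hg k) (hg_bdd k)] with ω hindep hsame
    rw [hindep, ← hsame]
    rfl
  have hX_lim := tendsto_eLpNorm_truncation_sub one_le_two ENNReal.ofNat_ne_top hL2
  have hX'_lim := tendsto_eLpNorm_truncation_sub one_le_two ENNReal.ofNat_ne_top hL2'
  have hc_lim := tendsto_eLpNorm_condExp_sub (m := m) one_le_two
    (fun k => (hgL2 hX k).integrable one_le_two) (hL2.integrable one_le_two) hX_lim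
  have hc := hL2.condExp (m := m) one_le_two
  have h_lhs := tendsto_integral_mul_of_tendsto_eLpNorm (hgL2 hX) (hgL2 hX') hL2 hL2'
    hX_lim hX'_lim
  have h_rhs := tendsto_integral_mul_of_tendsto_eLpNorm (fun k => (hgL2 hX k).condExp one_le_two)
    (fun k => (hgL2 hX k).condExp one_le_two) hc hc hc_lim hc_lim
  simp only [← h_bdd] at h_rhs
  simpa only [sq] using tendsto_nhds_unique h_lhs h_rhs

theorem estimator_V2_bias_general
    {Ω E F : Type*} (𝓖 : MeasurableSpace Ω)
    [MeasurableSpace Ω] [MeasurableSpace E] [MeasurableSpace F]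
    (P : Measure Ω) [IsProbabilityMeasure P]
    (Y : Ω → E) (X X' : Ω → F) (f : F → ℝ)
    (hY : Measurable Y) (hX : Measurable X) (hX' : Measurable X') (hf : Measurable f)
    (hL2 : MemLp (fun ω => f (X ω)) 2 P)
    (h𝓖 : 𝓖 = MeasurableSpace.comap Y inferInstance)
    -- conditional independence of `X` and `X'` given `𝓖 = σ(Y)`
    (hCondIndep : ∀ g h : F → ℝ, Measurable g → Measurable h →
      (∃ C, ∀ x, |g x| ≤ C) → (∃ C, ∀ x, |h x| ≤ C) →
      P[(fun ω => g (X ω) * h (X' ω))|𝓖]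
        =ᵐ[P] fun ω => ((P[(fun ω' => g (X ω'))|𝓖]) ω) * ((P[(fun ω' => h (X' ω'))|𝓖]) ω))
    -- `X` and `X'` have the same conditional distribution given `𝓖`
    (hSameCondDist : ∀ g : F → ℝ, Measurable g → (∃ C, ∀ x, |g x| ≤ C) →
      P[(fun ω => g (X ω))|𝓖] =ᵐ[P] P[(fun ω => g (X' ω))|𝓖])
    (σ2 σY2 : ℝ)
    (hσ2 : σ2 = variance (fun ω => f (X ω)) P)
    (hσY2 : σY2 = variance (P[(fun ω => f (X ω))|𝓖]) P)
    (N : ℕ) (hN : 0 < N)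
    -- i.i.d. sample triples `(Yₙ, Xₙ, X'ₙ)` with the same joint distribution as `(Y, X, X')`
    (Ys : Fin N → Ω → E) (Xs Xs' : Fin N → Ω → F)
    (hYs : ∀ n, Measurable (Ys n)) (hXs : ∀ n, Measurable (Xs n)) (hXs' : ∀ n, Measurable (Xs' n))
    (hIndep : iIndepFun (fun n ω => (Ys n ω, Xs n ω, Xs' n ω)) P)
    (hIdent : ∀ n, Measure.map (fun ω => (Ys n ω, Xs n ω, Xs' n ω)) P
        = Measure.map (fun ω => (Y ω, X ω, X' ω)) P)
    (muHat muHat' : Ω → ℝ)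
    (hmuHat : ∀ ω, muHat ω = (N : ℝ)⁻¹ * ∑ n, f (Xs n ω))
    (hmuHat' : ∀ ω, muHat' ω = (N : ℝ)⁻¹ * ∑ n, f (Xs' n ω))
    :
    ∫ ω, ((N : ℝ)⁻¹ * ∑ n, f (Xs n ω) * f (Xs' n ω) - ((muHat ω + muHat' ω) / 2) ^ 2) ∂P
      = σY2 - (σ2 + σY2) / (2 * (N : ℝ)) := by
  have hm : 𝓖 ≤ ‹MeasurableSpace Ω› := h𝓖 ▸ hY.comap_le
  have hfX : IdentDistrib (fun ω => f (X ω)) (fun ω => f (X' ω)) P P :=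
    (identDistrib_of_forall_integral_eq hX hX' fun g hg hg_bdd => by
      rw [← integral_condExp hm, ← integral_condExp hm (f := fun ω => g (X' ω))]
      exact integral_congr_ae (hSameCondDist g hg hg_bdd)).comp hf
  have hL2' := hfX.memLp_snd hL2
  have hcov : cov[fun ω => f (X ω), fun ω => f (X' ω); P] = σY2 := by
    rw [covariance_eq_sub hL2 hL2', ← hfX.integral_eq, Pi.mul_def,
      integral_mul_eq_integral_condExp_sq hm hX hX' hf hL2 hL2' hCondIndep hSameCondDist, hσY2,
      variance_eq_sub (hL2.condExp one_le_two), integral_condExp hm]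
    simp only [Pi.pow_apply, sq]
  have hφ : Measurable fun p : E × F × F => (f p.2.1, f p.2.2) := by fun_prop
  have h_law n : IdentDistrib (fun ω => (f (Xs n ω), f (Xs' n ω)))
      (fun ω => (f (X ω), f (X' ω))) P P :=
    (IdentDistrib.mk (by fun_prop) (by fun_prop) (hIdent n)).comp hφ
  have h_indep : iIndepFun (fun n ω => (f (Xs n ω), f (Xs' n ω))) P := hIndep.comp _ fun _ => hφ
  simp_rw [hmuHat, hmuHat']
  rw [integral_avg_mul_sub_sq_avg hN.ne' hL2 hfX h_law h_indep, hcov, hσ2]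

/-- `E[V₂] = σ_Y² - (σ² + σ_Y²)/(2N)` where `V₂ = N⁻¹ ∑ₙ f(Xₙ) f(X'ₙ) - ((μ̂ + μ̂')/2)²`. -/
theorem estimator_V2_bias
    {Ω E F : Type*} (𝓖 : MeasurableSpace Ω)
    [MeasurableSpace Ω] [MeasurableSpace E] [MeasurableSpace F]
    (P : Measure Ω) [IsProbabilityMeasure P]
    (Y : Ω → E) (X X' : Ω → F) (f : F → ℝ)
    (hY : Measurable Y) (hX : Measurable X) (hX' : Measurable X') (hf : Measurable f)
    (hL2 : MemLp (fun ω => f (X ω)) 2 P) (hL2' : MemLp (fun ω => f (X' ω)) 2 P)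
    (h𝓖 : 𝓖 = MeasurableSpace.comap Y inferInstance)
    -- conditional independence of `X` and `X'` given `𝓖 = σ(Y)`
    (hCondIndep : ∀ g h : F → ℝ, Measurable g → Measurable h →
      (∃ C, ∀ x, |g x| ≤ C) → (∃ C, ∀ x, |h x| ≤ C) →
      P[(fun ω => g (X ω) * h (X' ω))|𝓖]
        =ᵐ[P] fun ω => ((P[(fun ω' => g (X ω'))|𝓖]) ω) * ((P[(fun ω' => h (X' ω'))|𝓖]) ω))
    -- `X` and `X'` have the same conditional distribution given `𝓖`
    (hSameCondDist : ∀ g : F → ℝ, Measurable g → (∃ C, ∀ x, |g x| ≤ C) →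
      P[(fun ω => g (X ω))|𝓖] =ᵐ[P] P[(fun ω => g (X' ω))|𝓖])
    (μ σ2 σY2 : ℝ) (hμ : μ = ∫ ω, f (X ω) ∂P)
    (hσ2 : σ2 = variance (fun ω => f (X ω)) P)
    (hσY2 : σY2 = variance (P[(fun ω => f (X ω))|𝓖]) P)
    (N : ℕ) (hN : 0 < N)
    -- i.i.d. sample triples `(Yₙ, Xₙ, X'ₙ)` with the same joint distribution as `(Y, X, X')`
    (Ys : Fin N → Ω → E) (Xs Xs' : Fin N → Ω → F)
    (hYs : ∀ n, Measurable (Ys n)) (hXs : ∀ n, Measurable (Xs n)) (hXs' : ∀ n, Measurable (Xs' n))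
    (hIndep : iIndepFun (fun n ω => (Ys n ω, Xs n ω, Xs' n ω)) P)
    (hIdent : ∀ n, Measure.map (fun ω => (Ys n ω, Xs n ω, Xs' n ω)) P
        = Measure.map (fun ω => (Y ω, X ω, X' ω)) P)
    (muHat muHat' : Ω → ℝ)
    (hmuHat : ∀ ω, muHat ω = (N : ℝ)⁻¹ * ∑ n, f (Xs n ω))
    (hmuHat' : ∀ ω, muHat' ω = (N : ℝ)⁻¹ * ∑ n, f (Xs' n ω))
    :
    ∫ ω, ((N : ℝ)⁻¹ * ∑ n, f (Xs n ω) * f (Xs' n ω) - ((muHat ω + muHat' ω) / 2) ^ 2) ∂P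
      = σY2 - (σ2 + σY2) / (2 * (N : ℝ)) :=
  estimator_V2_bias_general 𝓖 P Y X X' f hY hX hX' hf hL2 h𝓖 hCondIndep hSameCondDist σ2 σY2 hσ2
    hσY2 N hN Ys Xs Xs' hYs hXs hXs' hIndep hIdent muHat muHat' hmuHat hmuHat'
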